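/- Let I be a set with |I| ≤ ℵ₀ and for each i ∈ I let 𝒜_i be a coreflective class of topological spaces. If SCH({C(ω)}) ⊆ CH(⋃_{i∈I} 𝒜_i), then there exists i₀ ∈ I such that SCH({C(ω)}) ⊆ 𝒜_{i₀}. (Here SCH({C(ω)}) is the class of subsequential spaces, i.e., subspaces of sequential spaces.) -/

import Mathlib

universe u v

/-- A class of topological spaces (in universe `u`): a predicate on spaces. -/
abbrev TopClass : Type (u + 1) := (X : Type u) → TopologicalSpace X → Prop

/-- A class of topological spaces is coreflective if it is closed under the formation of
topological sums and quotient spaces. -/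
def IsCoreflective (C : TopClass.{u}) : Prop :=
  (∀ (ι : Type u) (X : ι → Type u) (t : (i : ι) → TopologicalSpace (X i)),
      (∀ i, C (X i) (t i)) → C ((i : ι) × X i) (@instTopologicalSpaceSigma ι X t)) ∧
  (∀ (X Y : Type u) (tX : TopologicalSpace X) (tY : TopologicalSpace Y) (f : X → Y),
      @Topology.IsQuotientMap X Y tX tY f → C X tX → C Y tY)

/-- The coreflective hull of a class of spaces: the smallest coreflective class containing it. -/
def CH (A : TopClass.{u}) : TopClass.{u} :=
  fun X tX => ∀ C : TopClass.{u}, IsCoreflective C → (∀ Y tY, A Y tY → C Y tY) → C X tX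

/-- `SCH A` is the class of all subspaces of members of `CH A`. -/
def SCH (A : TopClass.{u}) : TopClass.{u} :=
  fun X tX => ∃ (Y : Type u) (tY : TopologicalSpace Y) (f : X → Y),
    CH A Y tY ∧ @Topology.IsEmbedding X Y tX tY f

/-- The class consisting of (the spaces homeomorphic to) a single space `A`. -/
def singleClass (A : Type u) (tA : TopologicalSpace A) : TopClass.{u} :=
  fun Y tY => Nonempty (@Homeomorph Y A tY tA)

/-- A class of topological spaces is hereditary if it is closed under subspaces. -/
def IsHereditary (C : TopClass.{u}) : Prop :=
  ∀ (X : Type u) (tX : TopologicalSpace X), C X tX →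
    ∀ (Z : Type u) (tZ : TopologicalSpace Z) (f : Z → X), @Topology.IsEmbedding Z X tZ tX f →
      C Z tZ

/-- The class `FG` of finitely generated (Alexandrov-discrete) topological spaces. -/
def FGClass : TopClass.{u} := fun X tX => @AlexandrovDiscrete X tX

/-- A filter space: a topological space with precisely one accumulation (non-isolated) point,
namely `a`. -/
def IsFilterSpace (X : Type u) [TopologicalSpace X] (a : X) : Prop :=
  ¬ IsOpen ({a} : Set X) ∧ ∀ x : X, x ≠ a → IsOpen ({x} : Set X)

/-- A filter subspace of a filter space `A` with accumulation point `a`: a subset containing `a`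
such that `a` is in the closure of `B \ {a}`. -/
def IsFilterSubspace (A : Type u) [TopologicalSpace A] (a : A) (B : Set A) : Prop :=
  a ∈ B ∧ a ∈ closure (B \ {a})

/-- `CIdx K m` represents the set `αⁿ` for `n = m+1`, where `K` plays the role of `α`. -/
def CIdx (K : Type u) : ℕ → Type u
  | 0 => K
  | m + 1 => K × CIdx K m

/-- Given a subset `U` of `(α × αⁿ) ∪ {∞}` and `ξ`, the set `{x ∈ αⁿ : (ξ,x) ∈ U} ∪ {∞}`. -/
def cslice {K J : Type u} (U : Set (Option (K × J))) (ξ : K) : Set (Option J) :=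
  insert none (Option.some '' {x : J | Option.some (ξ, x) ∈ U})

/-- The openness predicate of the space `C⁻(α, m+1)`. -/
def CIsOpen (K : Type u) : (m : ℕ) → Set (Option (CIdx K m)) → Prop
  | 0, U => none ∈ U → Cardinal.mk ((Option.some ⁻¹' U)ᶜ : Set K) < Cardinal.mk K
  | m + 1, U => none ∈ U →
      Cardinal.mk (({ξ : K | CIsOpen K m (cslice U ξ)}ᶜ : Set K)) < Cardinal.mk K

theorem cslice_mono {K J : Type u} {U V : Set (Option (K × J))} (h : U ⊆ V) (ξ : K) :
    cslice U ξ ⊆ cslice V ξ := by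
  intro z hz
  rcases hz with hz | hz
  · exact Or.inl hz
  · rcases hz with ⟨x, hx, rfl⟩
    exact Or.inr ⟨x, h hx, rfl⟩

theorem none_mem_cslice {K J : Type u} (U : Set (Option (K × J))) (ξ : K) :
    none ∈ cslice U ξ := Set.mem_insert _ _

theorem cisOpen_of_none_not_mem (K : Type u) (m : ℕ) (U : Set (Option (CIdx K m)))
    (h : none ∉ U) : CIsOpen K m U := by
  cases m with
  | zero => exact fun hU => absurd hU h
  | succ m => exact fun hU => absurd hU h

theorem cisOpen_mono (K : Type u) (m : ℕ) :
    ∀ U V : Set (Option (CIdx K m)), CIsOpen K m U → U ⊆ V → (none ∈ V → none ∈ U) →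
      CIsOpen K m V := by
  induction m with
  | zero =>
    intro U V hU hUV hnone hV
    refine lt_of_le_of_lt (Cardinal.mk_le_mk_of_subset ?_) (hU (hnone hV))
    intro k hk hU'
    exact hk (hUV hU')
  | succ m ih =>
    intro U V hU hUV hnone hV
    refine lt_of_le_of_lt (Cardinal.mk_le_mk_of_subset ?_) (hU (hnone hV))
    intro ξ hξ hopen
    exact hξ (ih _ _ hopen (cslice_mono hUV ξ) (fun _ => none_mem_cslice U ξ))

theorem cslice_univ {K J : Type u} (ξ : K) :
    cslice (Set.univ : Set (Option (K × J))) ξ = Set.univ := by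
  ext z
  cases z with
  | none => simp [cslice]
  | some j => simp [cslice]

theorem cisOpen_univ (K : Type u) [Nonempty K] (m : ℕ) : CIsOpen K m Set.univ := by
  cases m with
  | zero =>
    intro _
    have h0 : ((Option.some ⁻¹' (Set.univ : Set (Option K)))ᶜ : Set K) = ∅ := by simp
    show Cardinal.mk ((Option.some ⁻¹' (Set.univ : Set (Option K)))ᶜ : Set K) < Cardinal.mk K
    rw [h0, Cardinal.mk_emptyCollection]
    exact Cardinal.mk_ne_zero K |>.bot_lt
  | succ m =>
    intro _
    have h : ({ξ : K | CIsOpen K m (cslice (Set.univ : Set (Option (CIdx K (m+1)))) ξ)}ᶜ : Set K)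
        = ∅ := by
      ext ξ
      simp only [Set.mem_compl_iff, Set.mem_setOf_eq, Set.mem_empty_iff_false, iff_false, not_not]
      exact (congrArg (CIsOpen K m) (cslice_univ (J := CIdx K m) ξ)).mpr (cisOpen_univ K m)
    rw [h, Cardinal.mk_emptyCollection]
    exact Cardinal.mk_ne_zero K |>.bot_lt

theorem some_mem_cslice_iff {K J : Type u} (U : Set (Option (K × J))) (ξ : K) (x : J) :
    some x ∈ cslice U ξ ↔ some (ξ, x) ∈ U := by
  simp [cslice]

theorem cslice_inter {K J : Type u} (U V : Set (Option (K × J))) (ξ : K) :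
    cslice (U ∩ V) ξ = cslice U ξ ∩ cslice V ξ := by
  ext z
  cases z with
  | none => simp [none_mem_cslice]
  | some x => simp [some_mem_cslice_iff]

theorem cisOpen_inter (K : Type u) [Infinite K] (m : ℕ) :
    ∀ U V : Set (Option (CIdx K m)), CIsOpen K m U → CIsOpen K m V →
      CIsOpen K m (U ∩ V) := by
  induction m with
  | zero =>
    intro U V hU hV h
    have hsub : ((Option.some ⁻¹' (U ∩ V))ᶜ : Set K) ⊆
        (Option.some ⁻¹' U)ᶜ ∪ (Option.some ⁻¹' V)ᶜ := by
      intro x hx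
      by_contra hc
      exact hx ⟨by_contra fun h1 => hc (Or.inl h1), by_contra fun h2 => hc (Or.inr h2)⟩
    refine lt_of_le_of_lt (Cardinal.mk_le_mk_of_subset hsub) ?_
    refine lt_of_le_of_lt (Cardinal.mk_union_le _ _) ?_
    exact Cardinal.add_lt_of_lt (Cardinal.aleph0_le_mk K) (hU h.1) (hV h.2)
  | succ m ih =>
    intro U V hU hV h
    have hsub : ({ξ : K | CIsOpen K m (cslice (U ∩ V) ξ)}ᶜ : Set K) ⊆
        {ξ : K | CIsOpen K m (cslice U ξ)}ᶜ ∪ {ξ : K | CIsOpen K m (cslice V ξ)}ᶜ := by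
      intro ξ hξ
      by_contra hc
      simp only [Set.mem_union, Set.mem_compl_iff, Set.mem_setOf_eq, not_not] at hc hξ
      push_neg at hc
      exact hξ ((congrArg (CIsOpen K m) (cslice_inter (J := CIdx K m) U V ξ)).mpr
        (ih _ _ hc.1 hc.2))
    refine lt_of_le_of_lt (Cardinal.mk_le_mk_of_subset hsub) ?_
    refine lt_of_le_of_lt (Cardinal.mk_union_le _ _) ?_
    exact Cardinal.add_lt_of_lt (Cardinal.aleph0_le_mk K) (hU h.1) (hV h.2)

theorem cisOpen_sUnion (K : Type u) (m : ℕ) (S : Set (Set (Option (CIdx K m))))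
    (hS : ∀ U ∈ S, CIsOpen K m U) : CIsOpen K m (⋃₀ S) := by
  by_cases h : none ∈ ⋃₀ S
  · obtain ⟨U, hUS, hU⟩ := h
    exact cisOpen_mono K m U _ (hS U hUS) (Set.subset_sUnion_of_mem hUS) (fun _ => hU)
  · exact cisOpen_of_none_not_mem _ _ _ h

/-- The space `C⁻(α, m+1)` from the paper (so `m = 0` gives `C(α)` itself);
`K` plays the role of the set of ordinals `< α` and `none` plays the role of `∞`. -/
def CTop (K : Type u) [Infinite K] (m : ℕ) : TopologicalSpace (Option (CIdx K m)) where
  IsOpen := CIsOpen K m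
  isOpen_univ := cisOpen_univ K m
  isOpen_inter := cisOpen_inter K m
  isOpen_sUnion := cisOpen_sUnion K m

instance instCTop (K : Type u) [Infinite K] (m : ℕ) : TopologicalSpace (Option (CIdx K m)) :=
  CTop K m

/-!
Suppose no `𝒜 i` contains all subsequential spaces. After adjoining the discrete spaces to each
`𝒜 i`, every failure is witnessed by a prime space: a subset `R` of a sequential space with a
single non-isolated point `b`, whose neighbourhoods are traced from the ambient space. Enumerate
these witnesses as `fb n` along a surjection `e : ℕ → I` and glue them into one subsequential
space `W`: for every choice `c` of non-neighbourhoods `c n` of the base points, `W` has a blade of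
towers whose level-`n` coordinates avoid `c n`, all converging to a common apex, and every
neighbourhood of the apex meets every blade. If `W ∈ CH (⋃ i, 𝒜 i)`, its open sets are those
open for each of some topologies `T i` with `(W, T i) ∈ 𝒜 i`. If for some `n` every value of
`c n` can be completed to a blade whose complement is not `T (e n)`-open, the projections of these
blades to their `n`-th coordinates exhibit the prime space of `fb n` as a quotient of copies of
`(W, T (e n))`, which is impossible. Otherwise a bad value of `c n` for every `n` gives a blade
whose complement is open for every `T i`, hence in `W`, which is also impossible.
-/

open Topology Filter Set

theorem TopologicalSpace.eq_bot_of_isEmpty {X : Type*} [IsEmpty X] (t : TopologicalSpace X) :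
    t = ⊥ :=
  eq_bot_of_singletons_open isEmptyElim

theorem iSup_nhdsAdjoint_nhds {X : Type*} (t : TopologicalSpace X) :
    ⨆ x, nhdsAdjoint x (@nhds X t x) = t := by
  ext U
  rw [isOpen_iSup_iff, @isOpen_iff_mem_nhds X t]
  rfl

theorem TopologicalSpace.coinduced_const {X Y : Type*} (tX : TopologicalSpace X) (y : Y) :
    tX.coinduced (fun _ => y) = ⊥ := by
  classical
  refine eq_bot_of_singletons_open fun z => ?_
  rw [isOpen_coinduced, preimage_const]
  split_ifs
  exacts [isOpen_univ, isOpen_empty]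

namespace IsCoreflective

variable {C : TopClass.{u}}

theorem coinduced_mem (hC : IsCoreflective C) {X Y : Type u} {tX : TopologicalSpace X}
    (h : C X tX) {f : X → Y} (hf : Function.Surjective f) : C Y (tX.coinduced f) :=
  let tY := tX.coinduced f
  hC.2 X Y tX tY f (@IsQuotientMap.mk X Y tX tY f (@IsCoinducing.mk X Y tX tY f rfl) hf) h

theorem of_homeomorph (hC : IsCoreflective C) {X Y : Type u} [tX : TopologicalSpace X]
    [tY : TopologicalSpace Y] (e : X ≃ₜ Y) (h : C X tX) : C Y tY :=
  hC.2 X Y tX tY e e.isQuotientMap h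

theorem bot_mem (hC : IsCoreflective C) {Z : Type u} {tZ : TopologicalSpace Z} [Nonempty Z]
    (hZ : C Z tZ) (D : Type u) : C D ⊥ := by
  have h := hC.coinduced_mem (hC.1 D (fun _ => Z) (fun _ => tZ) fun _ => hZ)
    (f := Sigma.fst) fun d => ⟨⟨d, Classical.arbitrary Z⟩, rfl⟩
  simpa only [instTopologicalSpaceSigma, coinduced_iSup, coinduced_compose,
    Function.comp_def, TopologicalSpace.coinduced_const, iSup_bot] using h

/-- `Y` with the coinduced topology is the quotient of the sum of `X` and discrete `Y` under
`f ⊔ id`, so surjectivity of `f` is not needed once discrete spaces are in the class. -/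
theorem coinduced_mem_of_bot (hC : IsCoreflective C) (hbot : ∀ D : Type u, C D ⊥)
    {X Y : Type u} {tX : TopologicalSpace X} (h : C X tX) (f : X → Y) :
    C Y (tX.coinduced f) := by
  let F : Option PUnit.{u+1} → Type u := fun o => o.elim Y fun _ => X
  let t : (o : Option PUnit.{u+1}) → TopologicalSpace (F o) := fun o =>
    match o with
    | none => (⊥ : TopologicalSpace Y)
    | some _ => tX
  let q : (Σ o, F o) → Y := fun p =>
    match p with
    | ⟨none, y⟩ => y
    | ⟨some _, x⟩ => f x
  have hq := hC.coinduced_mem (hC.1 _ F t (fun o => match o with | none => hbot Y | some _ => h))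
    (f := q) fun y => ⟨⟨none, y⟩, rfl⟩
  convert hq using 1
  ext s
  rw [isOpen_coinduced, isOpen_coinduced, isOpen_sigma_iff, Option.forall]
  exact ⟨fun hs => ⟨trivial, fun _ => hs⟩, fun hs => hs.2 PUnit.unit⟩

theorem iSup_mem (hC : IsCoreflective C) (hbot : ∀ D : Type u, C D ⊥) {X : Type u} {ι : Type u}
    {t : ι → TopologicalSpace X} (h : ∀ i, C X (t i)) : C X (⨆ i, t i) := by
  have hq := hC.coinduced_mem_of_bot hbot (hC.1 ι (fun _ => X) t h) Sigma.snd
  simp only [instTopologicalSpaceSigma, coinduced_iSup, coinduced_compose] at hq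
  exact hq

end IsCoreflective

theorem isCoreflective_CH (A : TopClass.{u}) : IsCoreflective (CH A) :=
  ⟨fun ι X t hX C hC hAC => hC.1 ι X t fun i => hX i C hC hAC,
    fun X Y tX tY f hf hX C hC hAC => hC.2 X Y tX tY f hf (hX C hC hAC)⟩

theorem CH_of_mem {A : TopClass.{u}} {X : Type u} {tX : TopologicalSpace X} (h : A X tX) :
    CH A X tX :=
  fun _ _ hAC => hAC X tX h

theorem CH_minimal {A C : TopClass.{u}} (hC : IsCoreflective C) (hAC : ∀ Y tY, A Y tY → C Y tY)
    {X : Type u} {tX : TopologicalSpace X} (h : CH A X tX) : C X tX :=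
  h C hC hAC

theorem CH_singleClass_minimal {C : TopClass.{u}} (hC : IsCoreflective C) {A : Type u}
    {tA : TopologicalSpace A} (hA : C A tA) {X : Type u} {tX : TopologicalSpace X}
    (h : CH (singleClass A tA) X tX) : C X tX :=
  CH_minimal hC (fun _ _ ⟨e⟩ => @IsCoreflective.of_homeomorph _ hC _ _ tA _ e.symm hA) h

theorem isCoreflective_discrete : IsCoreflective fun _ tX => tX = ⊥ := by
  refine ⟨fun ι _ t ht => ?_, fun X Y tX tY f hf hX => ?_⟩
  · simp only [instTopologicalSpaceSigma, ht, coinduced_bot, iSup_bot]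
  · rw [(@IsQuotientMap.isCoinducing X Y tX tY f hf).eq_coinduced, hX, coinduced_bot]

def withDiscrete (B : TopClass.{u}) : TopClass.{u} := CH fun X tX => B X tX ∨ tX = ⊥

theorem withDiscrete_of_mem {B : TopClass.{u}} {X : Type u} {tX : TopologicalSpace X}
    (h : B X tX) : withDiscrete B X tX :=
  CH_of_mem (Or.inl h)

theorem withDiscrete_bot (B : TopClass.{u}) (X : Type u) : withDiscrete B X ⊥ :=
  CH_of_mem (Or.inr rfl)

theorem withDiscrete_le_of_nonempty {B : TopClass.{u}} (hB : IsCoreflective B) {Z : Type u}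
    {tZ : TopologicalSpace Z} [Nonempty Z] (hZ : B Z tZ) {X : Type u} {tX : TopologicalSpace X}
    (h : withDiscrete B X tX) : B X tX :=
  CH_minimal hB (fun Y _ hY => hY.elim id fun hbot => hbot ▸ hB.bot_mem hZ Y) h

theorem withDiscrete_eq_bot {B : TopClass.{u}} (hB : ∀ Z tZ, B Z tZ → IsEmpty Z) {X : Type u}
    {tX : TopologicalSpace X} (h : withDiscrete B X tX) : tX = ⊥ :=
  CH_minimal isCoreflective_discrete
    (fun Y tY hY => hY.elim (fun hBY => haveI := hB Y tY hBY; tY.eq_bot_of_isEmpty) id) h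

def ConvSeq : Type u := Option (ULift.{u} ℕ)

instance : TopologicalSpace ConvSeq.{u} := CTop (ULift.{u} ℕ) 0

namespace ConvSeq

instance : Nonempty ConvSeq.{u} := ⟨(none : Option _)⟩

def limit : ConvSeq.{u} := (none : Option _)

def term (k : ℕ) : ConvSeq.{u} := some (ULift.up k)

theorem isOpen_iff {U : Set ConvSeq.{u}} :
    IsOpen U ↔ (limit ∈ U → ∀ᶠ k in atTop, term k ∈ U) := by
  change (none ∈ U → _) ↔ _
  rw [Cardinal.mk_uLift, Cardinal.mk_nat]
  simp only [Cardinal.lift_aleph0, Cardinal.mk_lt_aleph0_iff, Set.finite_coe_iff,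
    ← Nat.cofinite_eq_atTop, eventually_cofinite]
  exact imp_congr_right fun _ => ⟨fun h => h.preimage ULift.up_injective.injOn,
    fun h => h.preimage ULift.down_injective.injOn⟩

theorem tendsto_term {φ : ℕ → ℕ} (hφ : Tendsto φ atTop atTop) :
    Tendsto (fun k => term (φ k)) atTop (𝓝 limit) :=
  tendsto_nhds.2 fun _ hU hlim => hφ.eventually (isOpen_iff.1 hU hlim)

theorem not_isOpen_limit : ¬ IsOpen {limit} := fun h => by
  obtain ⟨k, hk⟩ := (isOpen_iff.1 h rfl).exists
  cases hk

theorem topology_ne_bot : (inferInstance : TopologicalSpace ConvSeq.{u}) ≠ ⊥ := fun h =>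
  not_isOpen_limit (by have : DiscreteTopology ConvSeq.{u} := ⟨h⟩; exact isOpen_discrete _)

instance : SequentialSpace ConvSeq.{u} := by
  refine ⟨fun s hs => isOpen_compl_iff.1 (isOpen_iff.2 fun hlim => ?_)⟩
  by_contra hfreq
  obtain ⟨φ, hφ, hφs⟩ := extraction_of_frequently_atTop (not_eventually.1 hfreq)
  exact hlim (hs (fun k => not_not.1 (hφs k)) (tendsto_term hφ.tendsto_atTop))

end ConvSeq

theorem isCoreflective_sequentialSpace : IsCoreflective fun X tX => @SequentialSpace X tX :=
  ⟨fun _ _ _ _ => inferInstance, fun _ _ _ _ _ hf _ => hf.sequentialSpace⟩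

theorem sequentialSpace_of_CH {X : Type u} {tX : TopologicalSpace X}
    (h : CH (singleClass ConvSeq.{u} inferInstance) X tX) : @SequentialSpace X tX :=
  CH_singleClass_minimal isCoreflective_sequentialSpace inferInstance h

section SeqGen

variable {X : Type u}

def seqExtend (x : ℕ → X) (a : X) : ConvSeq.{u} → X :=
  fun z => Option.elim z a fun k => x k.down

/-- The finest topology in which each declared sequence `d.1` converges to `d.2`. -/
abbrev seqGen (D : Set ((ℕ → X) × X)) : TopologicalSpace X :=
  ⨆ d : D, TopologicalSpace.coinduced (seqExtend d.1.1 d.1.2) inferInstance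

theorem isOpen_seqGen_iff {D : Set ((ℕ → X) × X)} {U : Set X} :
    IsOpen[seqGen D] U ↔ ∀ d ∈ D, d.2 ∈ U → ∀ᶠ k in atTop, d.1 k ∈ U := by
  rw [seqGen, isOpen_iSup_iff]
  simp only [isOpen_coinduced, ConvSeq.isOpen_iff, Subtype.forall]
  rfl

theorem CH_seqGen (D : Set ((ℕ → X) × X)) :
    CH (singleClass ConvSeq.{u} inferInstance) X (seqGen D) := by
  intro C hC hA
  have hconv : C ConvSeq.{u} inferInstance := hA _ _ ⟨Homeomorph.refl _⟩
  exact hC.iSup_mem (hC.bot_mem hconv) fun d => hC.coinduced_mem_of_bot (hC.bot_mem hconv) hconv _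

end SeqGen

theorem SCH_convSeq :
    SCH (singleClass ConvSeq.{u} inferInstance) ConvSeq.{u} inferInstance :=
  ⟨ConvSeq, inferInstance, id, CH_of_mem ⟨Homeomorph.refl _⟩, IsEmbedding.id⟩

/-- A point `b` of a subset `R` of a sequential space `Y`. Its prime space `prime` is `R` with
every point but `b` isolated and the neighbourhoods of `b` traced from `Y`. -/
structure SeqTrace : Type (u + 1) where
  Y : Type u
  [topology : TopologicalSpace Y]
  [sequential : SequentialSpace Y]
  R : Set Y
  b : R

attribute [instance] SeqTrace.topology SeqTrace.sequential

namespace SeqTrace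

variable (f : SeqTrace.{u})

abbrev prime : TopologicalSpace f.R := nhdsAdjoint f.b (𝓝 f.b)

def NonNhd : Type u := {U : Set f.Y // U ∉ 𝓝[f.R] (f.b : f.Y)}

end SeqTrace

theorem exists_seqTrace_not_withDiscrete {B : TopClass.{u}} {X : Type u} {tX : TopologicalSpace X}
    (hX : SCH (singleClass ConvSeq.{u} inferInstance) X tX) (hXB : ¬ withDiscrete B X tX) :
    ∃ f : SeqTrace.{u}, ¬ withDiscrete B f.R f.prime := by
  obtain ⟨Y, tY, e, hY, he⟩ := hX
  have := sequentialSpace_of_CH hY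
  have hrange : ¬ withDiscrete B (range e) inferInstance := fun h =>
    hXB (@IsCoreflective.of_homeomorph _ (isCoreflective_CH _) _ _ _ tX
      (@IsEmbedding.toHomeomorph X Y tX tY e he).symm h)
  have hfactor : ¬ ∀ x : range e, withDiscrete B (range e) (nhdsAdjoint x (𝓝 x)) := fun h =>
    hrange (iSup_nhdsAdjoint_nhds (inferInstance : TopologicalSpace (range e)) ▸
      (isCoreflective_CH _).iSup_mem (withDiscrete_bot B) h)
  push Not at hfactor
  obtain ⟨x, hx⟩ := hfactor
  exact ⟨⟨Y, range e, x⟩, hx⟩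

theorem exists_not_withDiscrete {B : TopClass.{u}} (hB : IsCoreflective B)
    (h : ∃ X tX, SCH (singleClass ConvSeq.{u} inferInstance) X tX ∧ ¬ B X tX) :
    ∃ X tX, SCH (singleClass ConvSeq.{u} inferInstance) X tX ∧ ¬ withDiscrete B X tX := by
  by_cases hne : ∃ Z tZ, B Z tZ ∧ Nonempty Z
  · obtain ⟨Z, tZ, hZ, _⟩ := hne
    obtain ⟨X, tX, hX, hXB⟩ := h
    exact ⟨X, tX, hX, fun hw => hXB (withDiscrete_le_of_nonempty hB hZ hw)⟩
  · push Not at hne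
    exact ⟨ConvSeq, inferInstance, SCH_convSeq,
      fun hw => ConvSeq.topology_ne_bot (withDiscrete_eq_bot hne hw)⟩

def iSupClass {I : Type v} (B : I → TopClass.{u}) : TopClass.{u} :=
  fun X tX => ∃ T : I → TopologicalSpace X, (∀ i, B i X (T i)) ∧ tX = ⨆ i, T i

theorem isCoreflective_iSupClass {I : Type v} {B : I → TopClass.{u}}
    (hB : ∀ i, IsCoreflective (B i)) : IsCoreflective (iSupClass B) := by
  refine ⟨fun ι X t hX => ?_, fun X Y tX tY f hf ⟨T, hT, htX⟩ => ?_⟩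
  · choose T hT htX using hX
    obtain rfl : t = fun k => ⨆ i, T k i := funext htX
    refine ⟨fun i => @instTopologicalSpaceSigma ι X fun k => T k i,
      fun i => (hB i).1 ι X _ fun k => hT k i, ?_⟩
    simp only [instTopologicalSpaceSigma, coinduced_iSup]
    exact iSup_comm
  · refine ⟨fun i => (T i).coinduced f, fun i => (hB i).coinduced_mem (hT i) hf.surjective, ?_⟩
    rw [(@IsQuotientMap.isCoinducing X Y tX tY f hf).eq_coinduced, htX, coinduced_iSup]

theorem iSupClass_withDiscrete_of_CH {I : Type v} {𝒜 : I → TopClass.{u}} {X : Type u}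
    {tX : TopologicalSpace X} (hX : CH (fun Y tY => ∃ i, 𝒜 i Y tY) X tX) :
    iSupClass (fun i => withDiscrete (𝒜 i)) X tX := by
  classical
  refine CH_minimal (isCoreflective_iSupClass fun _ => isCoreflective_CH _)
    (fun Y tY ⟨i, hi⟩ => ⟨fun j => if j = i then tY else ⊥, fun j => ?_, ?_⟩) hX
  · show withDiscrete (𝒜 j) Y (if j = i then tY else ⊥)
    split_ifs with hj
    · exact withDiscrete_of_mem (hj ▸ hi)
    · exact withDiscrete_bot _ _
  · refine le_antisymm (le_iSup_of_le i (if_pos rfl).ge) (iSup_le fun j => ?_)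
    dsimp only
    split_ifs
    exacts [le_rfl, bot_le]

namespace SeqTrace

variable {f : SeqTrace.{u}}

theorem NonNhd.nonempty_diff (U : f.NonNhd) : (f.R \ U.1).Nonempty :=
  sdiff_nonempty.2 fun h => U.2 (mem_of_superset self_mem_nhdsWithin h)

end SeqTrace

namespace Wedge

variable (fb : ℕ → SeqTrace.{u})

def Choice : Type u := (n : ℕ) → (fb n).NonNhd

variable {fb} in
def avoid (c : Choice fb) (n : ℕ) : Set (fb n).Y := (fb n).R \ (c n).1

/-- Points `pt c N n x marked` of the `N`-th tower of the blade `c`, at level `n ≤ N`, with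
coordinates `x`; `apex` is the common limit of the towers. -/
inductive Ambient : Type u
  | apex : Ambient
  | pt (c : Choice fb) (N n : ℕ) (x : (j : ℕ) → (fb j).Y) (marked : Bool) : Ambient

open Ambient

variable {fb}

/-- The `climb` sequences glue a marked point of level `n` to the next level, so that a
neighbourhood of `apex` must reach a marked point of level `N` in each tower. -/
inductive Conv : (ℕ → Ambient fb) → Ambient fb → Prop
  | vary (c : Choice fb) (N n : ℕ) (x : (j : ℕ) → (fb j).Y) (ys : ℕ → (fb n).Y)
      (hys : Tendsto ys atTop (𝓝 (x n))) :
      Conv (fun k => pt c N n (Function.update x n (ys k)) false) (pt c N n x false)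
  | mark (c : Choice fb) (N n : ℕ) (x : (j : ℕ) → (fb j).Y) :
      Conv (fun _ => pt c N n x true) (pt c N n x false)
  | climb (c : Choice fb) (N n : ℕ) (x : (j : ℕ) → (fb j).Y) (hn : n < N) :
      Conv (fun _ => pt c N (n + 1) x false) (pt c N n x true)
  | root (c : Choice fb) : Conv (fun N => pt c N 0 (fun j => (fb j).b) false) apex

instance : TopologicalSpace (Ambient fb) := seqGen {d | Conv d.1 d.2}

theorem isOpen_ambient_iff {O : Set (Ambient fb)} :
    IsOpen O ↔ ∀ x a, Conv x a → a ∈ O → ∀ᶠ k in atTop, x k ∈ O :=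
  isOpen_seqGen_iff.trans ⟨fun h x a hd => h (x, a) hd, fun h d hd => h d.1 d.2 hd⟩

theorem Conv.exists_mem {x : ℕ → Ambient fb} {a : Ambient fb} (hd : Conv x a)
    {O : Set (Ambient fb)} (hO : IsOpen O) (ha : a ∈ O) : ∃ k, x k ∈ O :=
  (isOpen_ambient_iff.1 hO x a hd ha).exists

theorem Conv.tendsto {x : ℕ → Ambient fb} {a : Ambient fb} (hd : Conv x a) :
    Tendsto x atTop (𝓝 a) :=
  tendsto_nhds.2 fun _ hO ha => isOpen_ambient_iff.1 hO x a hd ha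

variable (fb) in
def wedge : Set (Ambient fb) :=
  {apex} ∪ {a | ∃ c N x, (∀ j ≤ N, x j ∈ avoid c j) ∧ a = pt c N N x true}

theorem SCH_wedge :
    SCH (singleClass ConvSeq.{u} inferInstance) (wedge fb) inferInstance :=
  ⟨Ambient fb, inferInstance, Subtype.val, CH_seqGen _, IsEmbedding.subtypeVal⟩

theorem isOpen_singleton_pt_marked (c : Choice fb) (N : ℕ) (x : (j : ℕ) → (fb j).Y) :
    IsOpen {pt c N N x true} := by
  refine isOpen_ambient_iff.2 fun _ _ hd ha => ?_
  cases hd with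
  | climb c' N' n x' hn => cases ha; omega
  | _ => cases ha

theorem exists_avoid_marked_mem {O : Set (Ambient fb)} (hO : IsOpen O) {c : Choice fb} {N n : ℕ}
    {x : (j : ℕ) → (fb j).Y} (hx : pt c N n x false ∈ O) (hxn : x n = (fb n).b) :
    ∃ y ∈ avoid c n, pt c N n (Function.update x n y) true ∈ O := by
  set g := fun y => pt c N n (Function.update x n y) false
  have hcont : Continuous g := continuous_iff_seqContinuous.2 fun ys y hys => by
    simpa [g, Function.comp_def] using
      (Conv.vary c N n (Function.update x n y) ys (by simpa using hys)).tendsto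
  have hP : g ⁻¹' O ∈ 𝓝 ((fb n).b : (fb n).Y) :=
    (hO.preimage hcont).mem_nhds (by simpa [g, ← hxn] using hx)
  -- `c n` is not a neighbourhood of the base point within `R`, so this neighbourhood escapes it.
  obtain ⟨y, ⟨hyO, hyR⟩, hyc⟩ : ∃ y ∈ _ ∩ (fb n).R, y ∉ (c n).1 :=
    not_subset.1 fun hsub => (c n).2 (mem_nhdsWithin_iff_exists_mem_nhds_inter.2 ⟨_, hP, hsub⟩)
  exact ⟨y, ⟨hyR, hyc⟩, (Conv.mark c N n _).exists_mem hO hyO |>.elim fun _ h => h⟩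

theorem update_mem_avoid {c : Choice fb} {n : ℕ} {x : (j : ℕ) → (fb j).Y}
    (hx : ∀ j < n, x j ∈ avoid c j) {y : (fb n).Y} (hy : y ∈ avoid c n) :
    ∀ j < n + 1, Function.update x n y j ∈ avoid c j := by
  intro j hj
  rcases (Nat.lt_succ_iff.1 hj).lt_or_eq with hj | rfl
  · rw [Function.update_of_ne hj.ne]
    exact hx j hj
  · rwa [Function.update_self]

theorem exists_pt_mem_of_isOpen {O : Set (Ambient fb)} (hO : IsOpen O) (hapex : apex ∈ O)
    (c : Choice fb) :
    ∃ N x, (∀ j ≤ N, x j ∈ avoid c j) ∧ pt c N N x true ∈ O := by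
  obtain ⟨N, hN⟩ := (Conv.root c).exists_mem hO hapex
  have hlevel : ∀ n ≤ N, ∃ x : (j : ℕ) → (fb j).Y, (∀ j < n, x j ∈ avoid c j) ∧
      (∀ j, n ≤ j → x j = (fb j).b) ∧ pt c N n x false ∈ O := by
    intro n
    induction n with
    | zero => exact fun _ => ⟨_, fun j hj => absurd hj j.not_lt_zero, fun _ _ => rfl, hN⟩
    | succ n ih =>
      intro hn
      obtain ⟨x, hxa, hxb, hxO⟩ := ih (by omega)
      obtain ⟨y, hy, hyO⟩ := exists_avoid_marked_mem hO hxO (hxb n le_rfl)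
      obtain ⟨_, hclimb⟩ := (Conv.climb c N n _ (by omega)).exists_mem hO hyO
      refine ⟨_, update_mem_avoid hxa hy, fun j hj => ?_, hclimb⟩
      rw [Function.update_of_ne (by omega)]
      exact hxb j (by omega)
  obtain ⟨x, hxa, hxb, hxO⟩ := hlevel N le_rfl
  obtain ⟨y, hy, hyO⟩ := exists_avoid_marked_mem hO hxO (hxb N le_rfl)
  exact ⟨N, _, fun j hj => update_mem_avoid hxa hy j (Nat.lt_succ_of_le hj), hyO⟩

def OnBlade (c : Choice fb) : Ambient fb → Prop
  | apex => False
  | pt c' _ _ _ _ => c' = c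

def offBlade (c : Choice fb) : Set (wedge fb) := {w | ¬ OnBlade c w.1}

def apexW : wedge fb := ⟨apex, Or.inl rfl⟩

theorem not_isOpen_offBlade (c : Choice fb) : ¬ IsOpen (offBlade c) := by
  rintro ⟨O, hO, hOc⟩
  have hapex : apexW ∈ offBlade c := not_false
  rw [← hOc] at hapex
  obtain ⟨N, x, hx, hxO⟩ := exists_pt_mem_of_isOpen hO hapex c
  have hw : (⟨_, Or.inr ⟨c, N, x, hx, rfl⟩⟩ : wedge fb) ∈ Subtype.val ⁻¹' O := hxO
  rw [hOc] at hw
  exact hw rfl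

theorem isOpen_singleton_of_ne_apexW {w : wedge fb} (hw : w ≠ apexW) : IsOpen {w} := by
  obtain ⟨_, rfl | ⟨c, N, x, -, rfl⟩⟩ := w
  · exact absurd rfl hw
  · convert (isOpen_singleton_pt_marked c N x).preimage continuous_subtype_val
    ext ⟨a, _⟩
    simp [Subtype.ext_iff]

theorem isOpen_of_mem_nhds_apexW {T : TopologicalSpace (wedge fb)}
    (hT : T ≤ instTopologicalSpaceSubtype) {A : Set (wedge fb)}
    (hA : apexW ∈ A → A ∈ @nhds _ instTopologicalSpaceSubtype apexW) : IsOpen[T] A := by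
  refine (@isOpen_iff_mem_nhds _ T A).2 fun w hw => ?_
  by_cases hw' : w = apexW
  · subst hw'
    exact nhds_mono hT (hA hw)
  · have hwT : IsOpen[T] {w} := hT {w} (isOpen_singleton_of_ne_apexW hw')
    exact mem_of_superset (@IsOpen.mem_nhds _ T _ _ hwT rfl) (singleton_subset_iff.2 hw)

def InBasic (c : Choice fb) (n : ℕ) (V : Set (fb n).Y) : Ambient fb → Prop
  | apex => True
  | pt c' N _ x _ => c' = c → n ≤ N ∧ x n ∈ V

theorem isOpen_setOf_inBasic (c : Choice fb) {n : ℕ} {V : Set (fb n).Y} (hV : IsOpen V)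
    (hb : ((fb n).b : (fb n).Y) ∈ V) : IsOpen {a | InBasic c n V a} := by
  refine isOpen_ambient_iff.2 fun _ _ hd ha => ?_
  cases hd with
  | vary c' N m x ys hys =>
    by_cases hc : c' = c
    · obtain ⟨hnN, hxV⟩ := ha hc
      by_cases hnm : n = m
      · subst hnm
        exact (hys.eventually (hV.mem_nhds hxV)).mono fun k hk _ =>
          ⟨hnN, by rwa [Function.update_self]⟩
      · exact Eventually.of_forall fun k _ => ⟨hnN, by rwa [Function.update_of_ne hnm]⟩
    · exact Eventually.of_forall fun k hc' => absurd hc' hc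
  | mark => exact Eventually.of_forall fun _ => ha
  | climb => exact Eventually.of_forall fun _ => ha
  | root c' => exact (eventually_ge_atTop n).mono fun N hN _ => ⟨hN, hb⟩

noncomputable def avoidPoint (c : Choice fb) (n : ℕ) : (fb n).R :=
  ⟨(c n).nonempty_diff.some, (c n).nonempty_diff.some_mem.1⟩

theorem avoidPoint_mem (c : Choice fb) (n : ℕ) : (avoidPoint c n : (fb n).Y) ∈ avoid c n :=
  (c n).nonempty_diff.some_mem

open scoped Classical in
/-- The `n`-th coordinate of the points of the blade `c`, as a point of the prime space of
`fb n`. Everything off the blade goes to the base point, and points of towers lower than `n`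
to a fixed point of `R \ c n`. -/
noncomputable def probe (c : Choice fb) (n : ℕ) : Ambient fb → (fb n).R
  | apex => (fb n).b
  | pt c' _ _ x _ =>
    if c' = c then if h : x n ∈ avoid c n then ⟨x n, h.1⟩ else avoidPoint c n else (fb n).b

theorem probe_mem_avoid {c : Choice fb} {n : ℕ} {a : Ambient fb} (ha : OnBlade c a) :
    (probe c n a : (fb n).Y) ∈ avoid c n := by
  cases a with
  | apex => exact ha.elim
  | pt c' N m x e =>
    simp only [probe, if_pos (show c' = c from ha)]
    split_ifs with h
    exacts [h, avoidPoint_mem c n]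

theorem probe_of_not_onBlade {c : Choice fb} {n : ℕ} {a : Ambient fb} (ha : ¬ OnBlade c a) :
    probe c n a = (fb n).b := by
  cases a with
  | apex => rfl
  | pt c' N m x e => exact if_neg ha

theorem probe_mem_of_inBasic {c : Choice fb} {n : ℕ} {V : Set (fb n).Y}
    (hb : ((fb n).b : (fb n).Y) ∈ V) {w : wedge fb} (hw : InBasic c n V w.1) :
    (probe c n w.1 : (fb n).Y) ∈ V := by
  by_cases hc : OnBlade c w.1
  · obtain ⟨_, rfl | ⟨c', N, x, hx, hwx⟩⟩ := w
    · exact hc.elim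
    · subst hwx
      obtain rfl : c' = c := hc
      obtain ⟨hnN, hxV⟩ := hw rfl
      simpa [probe, hx n hnN] using hxV
  · rwa [probe_of_not_onBlade hc]

theorem preimage_probe_mem_nhds (c : Choice fb) {n : ℕ} {s : Set (fb n).R}
    (hs : s ∈ 𝓝 (fb n).b) : (fun w : wedge fb => probe c n w.1) ⁻¹' s ∈ 𝓝 apexW := by
  obtain ⟨u, hu, hus⟩ := (mem_nhds_subtype _ _ _).1 hs
  obtain ⟨V, hVu, hV, hbV⟩ := mem_nhds_iff.1 hu
  exact mem_of_superset
    (((isOpen_setOf_inBasic c hV hbV).preimage continuous_subtype_val).mem_nhds trivial)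
    fun w hw => hus (hVu (probe_mem_of_inBasic hbV hw))

theorem continuous_probe {T : TopologicalSpace (wedge fb)} (hT : T ≤ instTopologicalSpaceSubtype)
    (c : Choice fb) (n : ℕ) : Continuous[T, (fb n).prime] fun w : wedge fb => probe c n w.1 :=
  @Continuous.mk _ _ T (fb n).prime _ fun _ hs =>
    isOpen_of_mem_nhds_apexW hT fun hapex => preimage_probe_mem_nhds c (hs hapex)

theorem preimage_probe {c : Choice fb} {n : ℕ} {s : Set (fb n).R}
    (hcs : (c n).1 = Subtype.val '' s) (hb : (fb n).b ∈ s) :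
    (fun w : wedge fb => probe c n w.1) ⁻¹' s = offBlade c := by
  ext w
  by_cases hw : OnBlade c w.1
  · have := (probe_mem_avoid (n := n) hw).2
    rw [hcs] at this
    exact iff_of_false (fun hs => this ⟨_, hs, rfl⟩) (not_not.2 hw)
  · exact iff_of_true (by simpa [probe_of_not_onBlade hw] using hb) hw

/-- The probes exhibit the prime space as a quotient of copies of `(wedge fb, T)` and a discrete
space. -/
theorem prime_mem_of_forall_not_isOpen_offBlade {C : TopClass.{u}} (hC : IsCoreflective C)
    (hbot : ∀ D : Type u, C D ⊥) {T : TopologicalSpace (wedge fb)}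
    (hT : T ≤ instTopologicalSpaceSubtype) (hCT : C (wedge fb) T) {n : ℕ}
    (h : ∀ U : (fb n).NonNhd, ∃ c : Choice fb, c n = U ∧ ¬ IsOpen[T] (offBlade c)) :
    C (fb n).R (fb n).prime := by
  choose c hcn hc using h
  have hprime : (fb n).prime = ⨆ U, T.coinduced fun w => probe (c U) n w.1 := by
    ext s
    rw [isOpen_iSup_iff]
    refine ⟨fun hs U => @Continuous.isOpen_preimage _ _ T (fb n).prime _
      (continuous_probe hT (c U) n) s hs, fun hs hb => ?_⟩
    by_contra hsb
    let U : (fb n).NonNhd := ⟨Subtype.val '' s, mem_nhds_subtype_iff_nhdsWithin.not.1 hsb⟩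
    exact hc U (preimage_probe (congrArg Subtype.val (hcn U)) hb ▸ hs U)
  rw [hprime]
  exact hC.iSup_mem hbot fun U => hC.coinduced_mem_of_bot hbot hCT _

theorem exists_forall_not_isOpen_offBlade {T : ℕ → TopologicalSpace (wedge fb)}
    (hT : instTopologicalSpaceSubtype = ⨆ n, T n) :
    ∃ n, ∀ U : (fb n).NonNhd, ∃ c : Choice fb, c n = U ∧ ¬ IsOpen[T n] (offBlade c) := by
  by_contra! h
  choose c hc using h
  exact not_isOpen_offBlade c (hT ▸ isOpen_iSup_iff.2 fun n => hc n c rfl)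

end Wedge

/-- let `I` be countable (`|I| ≤ ℵ₀`) and each `𝒜 i` coreflective.  If the class
of subsequential spaces `SCH {C(ω)}` is contained in `CH (⋃ i, 𝒜 i)`, then it is contained in
some `𝒜 i₀`.  Here `C(ω)`, the convergent sequence, is realized as `Option (ULift ℕ)` with
the topology `CTop (ULift ℕ) 0` (all points of `ℕ` isolated, neighbourhoods of `∞ = none`
cofinite). -/
theorem stmt16 {I : Type v} [Countable I] (𝒜 : I → TopClass.{u})
    (h𝒜 : ∀ i, IsCoreflective (𝒜 i))
    (h : ∀ (X : Type u) (tX : TopologicalSpace X),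
      SCH (singleClass (Option (ULift.{u} ℕ)) (CTop (ULift.{u} ℕ) 0)) X tX →
        CH (fun Y tY => ∃ i, 𝒜 i Y tY) X tX) :
    ∃ i₀ : I, ∀ (X : Type u) (tX : TopologicalSpace X),
      SCH (singleClass (Option (ULift.{u} ℕ)) (CTop (ULift.{u} ℕ) 0)) X tX → 𝒜 i₀ X tX := by
  by_contra! hbad
  rcases isEmpty_or_nonempty I with hI | hI
  · obtain ⟨T, -, hT⟩ := iSupClass_withDiscrete_of_CH (h _ _ SCH_convSeq)
    exact ConvSeq.topology_ne_bot (hT.trans (iSup_of_empty T))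
  obtain ⟨e, he⟩ := exists_surjective_nat I
  choose f hf using fun i =>
    have ⟨X, tX, hX, hXB⟩ := exists_not_withDiscrete (h𝒜 i) (hbad i)
    exists_seqTrace_not_withDiscrete hX hXB
  obtain ⟨T, hTmem, hT⟩ :=
    iSupClass_withDiscrete_of_CH (h _ _ (Wedge.SCH_wedge (fb := f ∘ e)))
  obtain ⟨n, hn⟩ :=
    Wedge.exists_forall_not_isOpen_offBlade (T := T ∘ e) (hT.trans (he.iSup_comp T).symm)
  exact hf (e n) <| Wedge.prime_mem_of_forall_not_isOpen_offBlade (isCoreflective_CH _)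
    (withDiscrete_bot _) ((le_iSup T (e n)).trans_eq hT.symm) (hTmem (e n)) hn
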